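/- The inverse function ψ of W is a strictly decreasing C¹ bijection of (0,∞) satisfying (2/M)·ψ(t)/t ≤ −ψ'(t) ≤ (2/m)·ψ(t)/t for all t > 0; consequently t ↦ ψ(t)·t^{2/m} is nondecreasing on (0,∞) and t ↦ ψ(t)·t^{2/M} is nonincreasing on (0,∞). -/

import Mathlib

open MeasureTheory Set Filter Topology

noncomputable section

/-- `F(t) = ∫₀ᵗ f(s) ds`. -/
noncomputable def Fint (f : ℝ → ℝ) (t : ℝ) : ℝ := ∫ s in (0:ℝ)..t, f s

/-- `W(t) = ∫ₜ^∞ F(s)^{-1/2} ds`. -/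
noncomputable def Wfun (f : ℝ → ℝ) (t : ℝ) : ℝ := ∫ s in Set.Ioi t, (Fint f s) ^ (-(1:ℝ)/2)

/-- `Φ(t) = φ(t^{-2})^{-1/2}`. -/
noncomputable def PhiFun (φ : ℝ → ℝ) (t : ℝ) : ℝ := (φ (t ^ (-(2:ℝ)))) ^ (-(1:ℝ)/2)

/-- The Keller–Osserman kernel `t ↦ (φ^{-1}(W(t)^{-2}))^{-1/2}`. -/
noncomputable def KOker (φinv f : ℝ → ℝ) (t : ℝ) : ℝ :=
  (φinv ((Wfun f t) ^ (-(2:ℝ)))) ^ (-(1:ℝ)/2)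

section KOAux
variable {f : ℝ → ℝ}

lemma Fint_hasDerivAt (hfC1 : Continuous f) (t : ℝ) : HasDerivAt (Fint f) (f t) t :=
  intervalIntegral.integral_hasDerivAt_right (hfC1.intervalIntegrable _ _)
    hfC1.aestronglyMeasurable.stronglyMeasurableAtFilter hfC1.continuousAt

lemma Fint_cont (hfC1 : Continuous f) : Continuous (Fint f) := by
  have : Differentiable ℝ (Fint f) := fun t => (Fint_hasDerivAt hfC1 t).differentiableAt
  exact this.continuous

lemma Fint_pos (hfC1 : Continuous f) (hfpos : ∀ t > 0, 0 < f t) {t : ℝ} (ht : 0 < t) :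
    0 < Fint f t :=
  intervalIntegral.intervalIntegral_pos_of_pos_on (hfC1.intervalIntegrable _ _)
    (fun x hx => hfpos x hx.1) ht

lemma Fint_mono (hfC1 : Continuous f) (hfnn : ∀ t, 0 ≤ f t) : Monotone (Fint f) := by
  apply monotone_of_deriv_nonneg (fun t => (Fint_hasDerivAt hfC1 t).differentiableAt)
  intro t
  rw [(Fint_hasDerivAt hfC1 t).deriv]
  exact hfnn t

lemma Fint_scal {m M : ℝ} (hm : 0 < m)
    (hf0 : f 0 = 0) (hfnn : ∀ t, 0 ≤ f t)
    (hfC1 : ContDiff ℝ 1 f)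
    (hfscal : ∀ t > 0, (1 + m) * f t ≤ t * deriv f t ∧ t * deriv f t ≤ (1 + M) * f t)
    {t : ℝ} (ht : 0 < t) :
    (2 + m) * Fint f t ≤ t * f t ∧ t * f t ≤ (2 + M) * Fint f t := by
  have hc := hfC1.continuous
  have hdf : ∀ x : ℝ, HasDerivAt f (deriv f x) x := fun x =>
    ((hfC1.differentiable one_ne_zero) x).hasDerivAt
  have hF0 : Fint f 0 = 0 := intervalIntegral.integral_same
  have key : ∀ c : ℝ, (∀ x > 0, 0 ≤ f x + x * deriv f x - c * f x) →
      MonotoneOn (fun t => t * f t - c * Fint f t) (Ici 0) := by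
    intro c hc'
    apply monotoneOn_of_deriv_nonneg (convex_Ici 0)
    · exact ((continuous_id.mul hc).sub (continuous_const.mul (Fint_cont hc))).continuousOn
    · intro x hx
      exact (((hasDerivAt_id x).mul (hdf x)).sub
        ((Fint_hasDerivAt hc x).const_mul c)).differentiableAt.differentiableWithinAt
    · intro x hx
      rw [interior_Ici] at hx
      have hD : HasDerivAt (fun t => t * f t - c * Fint f t)
          (1 * f x + x * deriv f x - c * f x) x :=
        ((hasDerivAt_id x).mul (hdf x)).sub ((Fint_hasDerivAt hc x).const_mul c)
      rw [hD.deriv]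
      have := hc' x hx
      linarith
  constructor
  · have h1 := key (2 + m) (fun x hx => by have := (hfscal x hx).1; linarith)
    have := h1 (self_mem_Ici) (mem_Ici.2 ht.le) ht.le
    simp only [hf0, hF0, mul_zero, zero_mul, sub_zero, mul_zero] at this
    linarith
  · have key2 : MonotoneOn (fun t => (2 + M) * Fint f t - t * f t) (Ici 0) := by
      apply monotoneOn_of_deriv_nonneg (convex_Ici 0)
      · exact ((continuous_const.mul (Fint_cont hc)).sub (continuous_id.mul hc)).continuousOn
      · intro x hx
        exact (((Fint_hasDerivAt hc x).const_mul (2+M)).sub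
          ((hasDerivAt_id x).mul (hdf x))).differentiableAt.differentiableWithinAt
      · intro x hx
        rw [interior_Ici] at hx
        have hD : HasDerivAt (fun t => (2 + M) * Fint f t - t * f t)
            ((2 + M) * f x - (1 * f x + x * deriv f x)) x :=
          ((Fint_hasDerivAt hc x).const_mul (2+M)).sub ((hasDerivAt_id x).mul (hdf x))
        rw [hD.deriv]
        have := (hfscal x hx).2
        linarith
    have := key2 (self_mem_Ici) (mem_Ici.2 ht.le) ht.le
    simp only [hf0, hF0, mul_zero, zero_mul, sub_zero, mul_zero] at this
    linarith



lemma g_contOn (hc : Continuous f) (hfpos : ∀ t > 0, 0 < f t) :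
    ContinuousOn (fun s => (Fint f s) ^ (-(1:ℝ)/2)) (Ioi 0) :=
  ContinuousOn.rpow_const (Fint_cont hc).continuousOn
    (fun x hx => Or.inl (Fint_pos hc hfpos hx).ne')

lemma g_pos (hc : Continuous f) (hfpos : ∀ t > 0, 0 < f t) {s : ℝ} (hs : 0 < s) :
    0 < (Fint f s) ^ (-(1:ℝ)/2) :=
  Real.rpow_pos_of_pos (Fint_pos hc hfpos hs) _

lemma g_intble (hc : Continuous f) (hfpos : ∀ t > 0, 0 < f t) {a b : ℝ}
    (ha : 0 < a) (hab : a ≤ b) :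
    IntervalIntegrable (fun s => (Fint f s) ^ (-(1:ℝ)/2)) volume a b := by
  apply ContinuousOn.intervalIntegrable
  apply (g_contOn hc hfpos).mono
  rw [uIcc_of_le hab]
  exact fun x hx => lt_of_lt_of_le ha hx.1

lemma W_split (hc : Continuous f) (hfpos : ∀ t > 0, 0 < f t)
    (hWfin : ∀ t > 0, IntegrableOn (fun s => (Fint f s) ^ (-(1:ℝ)/2)) (Set.Ioi t))
    {a b : ℝ} (ha : 0 < a) (hab : a ≤ b) :
    Wfun f a = (∫ x in a..b, (Fint f x) ^ (-(1:ℝ)/2)) + Wfun f b := by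
  have hb : 0 < b := lt_of_lt_of_le ha hab
  rw [Wfun, ← Set.Ioc_union_Ioi_eq_Ioi hab,
    setIntegral_union (Set.Ioc_disjoint_Ioi le_rfl) measurableSet_Ioi
      ((hWfin a ha).mono_set Set.Ioc_subset_Ioi_self) (hWfin b hb),
    intervalIntegral.integral_of_le hab]
  rfl

lemma W_hasDerivAt (hc : Continuous f) (hfpos : ∀ t > 0, 0 < f t)
    (hWfin : ∀ t > 0, IntegrableOn (fun s => (Fint f s) ^ (-(1:ℝ)/2)) (Set.Ioi t))
    {t : ℝ} (ht : 0 < t) :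
    HasDerivAt (Wfun f) (-((Fint f t) ^ (-(1:ℝ)/2))) t := by
  have ha : 0 < t/2 := by linarith
  have hat : t/2 < t := by linarith
  have hφ : HasDerivAt
      (fun y => Wfun f (t/2) - ∫ x in (t/2)..y, (Fint f x) ^ (-(1:ℝ)/2))
      (-((Fint f t) ^ (-(1:ℝ)/2))) t := by
    apply HasDerivAt.const_sub
    exact intervalIntegral.integral_hasDerivAt_right (g_intble hc hfpos ha hat.le)
      (ContinuousOn.stronglyMeasurableAtFilter isOpen_Ioi (g_contOn hc hfpos) _ ht)
      ((g_contOn hc hfpos).continuousAt (Ioi_mem_nhds ht))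
  apply hφ.congr_of_eventuallyEq
  filter_upwards [Ioi_mem_nhds hat] with y hy
  have := W_split hc hfpos hWfin ha (le_of_lt hy)
  linarith

lemma W_pos (hc : Continuous f) (hfpos : ∀ t > 0, 0 < f t)
    (hWfin : ∀ t > 0, IntegrableOn (fun s => (Fint f s) ^ (-(1:ℝ)/2)) (Set.Ioi t))
    {t : ℝ} (ht : 0 < t) : 0 < Wfun f t := by
  have hs := W_split hc hfpos hWfin ht (le_of_lt (lt_add_one t))
  have h1 : 0 < ∫ x in t..(t+1), (Fint f x) ^ (-(1:ℝ)/2) :=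
    intervalIntegral.intervalIntegral_pos_of_pos_on (g_intble hc hfpos ht (lt_add_one t).le)
      (fun x hx => g_pos hc hfpos (lt_trans ht hx.1)) (lt_add_one t)
  have h2 : 0 ≤ Wfun f (t+1) :=
    setIntegral_nonneg measurableSet_Ioi
      (fun x hx => (g_pos hc hfpos (by linarith [mem_Ioi.1 hx])).le)
  linarith

lemma W_anti (hc : Continuous f) (hfpos : ∀ t > 0, 0 < f t)
    (hWfin : ∀ t > 0, IntegrableOn (fun s => (Fint f s) ^ (-(1:ℝ)/2)) (Set.Ioi t))
    {s t : ℝ} (hs : 0 < s) (hst : s < t) : Wfun f t < Wfun f s := by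
  have hsp := W_split hc hfpos hWfin hs hst.le
  have h1 : 0 < ∫ x in s..t, (Fint f x) ^ (-(1:ℝ)/2) :=
    intervalIntegral.intervalIntegral_pos_of_pos_on (g_intble hc hfpos hs hst.le)
      (fun x hx => g_pos hc hfpos (lt_trans hs hx.1)) hst
  linarith

lemma W_tendsto (hc : Continuous f) (hfpos : ∀ t > 0, 0 < f t)
    (hWfin : ∀ t > 0, IntegrableOn (fun s => (Fint f s) ^ (-(1:ℝ)/2)) (Set.Ioi t)) :
    Tendsto (Wfun f) atTop (𝓝 0) := by
  have h1 : Tendsto (fun T => ∫ x in (1:ℝ)..T, (Fint f x) ^ (-(1:ℝ)/2)) atTop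
      (𝓝 (Wfun f 1)) :=
    intervalIntegral_tendsto_integral_Ioi 1 (hWfin 1 one_pos) tendsto_id
  have h2 : Tendsto (fun T => Wfun f 1 - ∫ x in (1:ℝ)..T, (Fint f x) ^ (-(1:ℝ)/2)) atTop
      (𝓝 (Wfun f 1 - Wfun f 1)) := tendsto_const_nhds.sub h1
  rw [sub_self] at h2
  apply h2.congr'
  filter_upwards [eventually_ge_atTop 1] with T hT
  have := W_split hc hfpos hWfin one_pos hT
  linarith



lemma rpow_split (hc : Continuous f) (hfpos : ∀ t > 0, 0 < f t) {s : ℝ} (hs : 0 < s) :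
    (Fint f s) ^ (-(1:ℝ)/2) = Fint f s * (Fint f s) ^ (-(3:ℝ)/2) := by
  rw [show (-(1:ℝ)/2) = 1 + (-(3:ℝ)/2) by norm_num,
    Real.rpow_add (Fint_pos hc hfpos hs), Real.rpow_one]

lemma G_hasDerivAt (hc : Continuous f) (hfpos : ∀ t > 0, 0 < f t) {s : ℝ} (hs : 0 < s) :
    HasDerivAt (fun x => x * (Fint f x) ^ (-(1:ℝ)/2))
      ((Fint f s - s * f s / 2) * (Fint f s) ^ (-(3:ℝ)/2)) s := by
  have hF := Fint_pos hc hfpos hs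
  have h := (hasDerivAt_id s).mul
    ((Fint_hasDerivAt hc s).rpow_const (p := -(1:ℝ)/2) (Or.inl hF.ne'))
  refine h.congr_deriv ?_
  rw [rpow_split hc hfpos hs, show (-(1:ℝ)/2 - 1) = (-(3:ℝ)/2) by norm_num]
  simp only [id_eq]
  ring

lemma Gderiv_bounds {m M : ℝ} (hm : 0 < m) (hmM : m ≤ M)
    (hf0 : f 0 = 0) (hfnn : ∀ t, 0 ≤ f t) (hfpos : ∀ t > 0, 0 < f t)
    (hfC1 : ContDiff ℝ 1 f)
    (hfscal : ∀ t > 0, (1 + m) * f t ≤ t * deriv f t ∧ t * deriv f t ≤ (1 + M) * f t)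
    {s : ℝ} (hs : 0 < s) :
    -((M/2) * (Fint f s) ^ (-(1:ℝ)/2)) ≤ (Fint f s - s * f s / 2) * (Fint f s) ^ (-(3:ℝ)/2) ∧
    (Fint f s - s * f s / 2) * (Fint f s) ^ (-(3:ℝ)/2) ≤ -((m/2) * (Fint f s) ^ (-(1:ℝ)/2)) := by
  have hc := hfC1.continuous
  have hF := Fint_pos hc hfpos hs
  have hA : 0 < (Fint f s) ^ (-(3:ℝ)/2) := Real.rpow_pos_of_pos hF _
  obtain ⟨h1, h2⟩ := Fint_scal hm hf0 hfnn hfC1 hfscal hs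
  rw [rpow_split hc hfpos hs]
  constructor
  · have : -((M/2) * Fint f s) ≤ Fint f s - s * f s / 2 := by linarith
    nlinarith [mul_le_mul_of_nonneg_right this hA.le]
  · have : Fint f s - s * f s / 2 ≤ -((m/2) * Fint f s) := by linarith
    nlinarith [mul_le_mul_of_nonneg_right this hA.le]

lemma Gderiv_contOn (hc : Continuous f) (hfpos : ∀ t > 0, 0 < f t) :
    ContinuousOn (fun s => (Fint f s - s * f s / 2) * (Fint f s) ^ (-(3:ℝ)/2)) (Ioi 0) := by
  apply ContinuousOn.mul
  · exact ((Fint_cont hc).continuousOn.sub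
      ((continuousOn_id.mul hc.continuousOn).div_const 2))
  · exact ContinuousOn.rpow_const (Fint_cont hc).continuousOn
      (fun x hx => Or.inl (Fint_pos hc hfpos hx).ne')

lemma G_step {m M : ℝ} (hm : 0 < m) (hmM : m ≤ M)
    (hf0 : f 0 = 0) (hfnn : ∀ t, 0 ≤ f t) (hfpos : ∀ t > 0, 0 < f t)
    (hfC1 : ContDiff ℝ 1 f)
    (hfscal : ∀ t > 0, (1 + m) * f t ≤ t * deriv f t ∧ t * deriv f t ≤ (1 + M) * f t)
    (hWfin : ∀ t > 0, IntegrableOn (fun s => (Fint f s) ^ (-(1:ℝ)/2)) (Set.Ioi t))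
    {s T : ℝ} (hs : 0 < s) (hsT : s ≤ T) :
    (m/2) * (Wfun f s - Wfun f T) ≤
      s * (Fint f s) ^ (-(1:ℝ)/2) - T * (Fint f T) ^ (-(1:ℝ)/2) ∧
    s * (Fint f s) ^ (-(1:ℝ)/2) - T * (Fint f T) ^ (-(1:ℝ)/2) ≤
      (M/2) * (Wfun f s - Wfun f T) := by
  have hc := hfC1.continuous
  have hmem : ∀ x ∈ uIcc s T, 0 < x := by
    rw [uIcc_of_le hsT]; exact fun x hx => lt_of_lt_of_le hs hx.1
  have hftc : (∫ x in s..T, (Fint f x - x * f x / 2) * (Fint f x) ^ (-(3:ℝ)/2)) =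
      T * (Fint f T) ^ (-(1:ℝ)/2) - s * (Fint f s) ^ (-(1:ℝ)/2) := by
    apply intervalIntegral.integral_eq_sub_of_hasDerivAt
    · exact fun x hx => G_hasDerivAt hc hfpos (hmem x hx)
    · apply ContinuousOn.intervalIntegrable
      exact (Gderiv_contOn hc hfpos).mono (fun x hx => hmem x hx)
  have hWdiff : Wfun f s - Wfun f T = ∫ x in s..T, (Fint f x) ^ (-(1:ℝ)/2) := by
    have := W_split hc hfpos hWfin hs hsT
    linarith
  have hgi := g_intble hc hfpos hs hsT
  have hGi : IntervalIntegrable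
      (fun x => (Fint f x - x * f x / 2) * (Fint f x) ^ (-(3:ℝ)/2)) volume s T :=
    ContinuousOn.intervalIntegrable ((Gderiv_contOn hc hfpos).mono (fun x hx => hmem x hx))
  constructor
  · have hmono : (∫ x in s..T, (Fint f x - x * f x / 2) * (Fint f x) ^ (-(3:ℝ)/2)) ≤
        ∫ x in s..T, -((m/2) * (Fint f x) ^ (-(1:ℝ)/2)) := by
      apply intervalIntegral.integral_mono_on hsT hGi (hgi.const_mul (m/2)).neg
      intro x hx
      exact (Gderiv_bounds hm hmM hf0 hfnn hfpos hfC1 hfscal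
        (hmem x (by rw [uIcc_of_le hsT]; exact hx))).2
    rw [intervalIntegral.integral_neg, intervalIntegral.integral_const_mul] at hmono
    rw [hWdiff]
    linarith
  · have hmono : (∫ x in s..T, -((M/2) * (Fint f x) ^ (-(1:ℝ)/2))) ≤
        ∫ x in s..T, (Fint f x - x * f x / 2) * (Fint f x) ^ (-(3:ℝ)/2) := by
      apply intervalIntegral.integral_mono_on hsT (hgi.const_mul (M/2)).neg hGi
      intro x hx
      exact (Gderiv_bounds hm hmM hf0 hfnn hfpos hfC1 hfscal
        (hmem x (by rw [uIcc_of_le hsT]; exact hx))).1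
    rw [intervalIntegral.integral_neg, intervalIntegral.integral_const_mul] at hmono
    rw [hWdiff]
    linarith

lemma G_decay (hc : Continuous f) (hfnn : ∀ t, 0 ≤ f t) (hfpos : ∀ t > 0, 0 < f t)
    (hWfin : ∀ t > 0, IntegrableOn (fun s => (Fint f s) ^ (-(1:ℝ)/2)) (Set.Ioi t))
    {T : ℝ} (hT : 0 < T) :
    2 * T * (Fint f (2*T)) ^ (-(1:ℝ)/2) ≤ 2 * (Wfun f T - Wfun f (2*T)) := by
  have hT2 : T ≤ 2*T := by linarith
  have hWdiff : Wfun f T - Wfun f (2*T) = ∫ x in T..(2*T), (Fint f x) ^ (-(1:ℝ)/2) := by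
    have := W_split hc hfpos hWfin hT hT2
    linarith
  have hlow : (∫ x in T..(2*T), (Fint f (2*T)) ^ (-(1:ℝ)/2)) ≤
      ∫ x in T..(2*T), (Fint f x) ^ (-(1:ℝ)/2) := by
    apply intervalIntegral.integral_mono_on hT2 intervalIntegrable_const
      (g_intble hc hfpos hT hT2)
    intro x hx
    exact Real.rpow_le_rpow_of_nonpos (Fint_pos hc hfpos (lt_of_lt_of_le hT hx.1))
      (Fint_mono hc hfnn hx.2) (by norm_num)
  rw [intervalIntegral.integral_const, smul_eq_mul] at hlow
  rw [hWdiff]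
  nlinarith [hlow]

lemma G_bounds {m M : ℝ} (hm : 0 < m) (hmM : m ≤ M)
    (hf0 : f 0 = 0) (hfnn : ∀ t, 0 ≤ f t) (hfpos : ∀ t > 0, 0 < f t)
    (hfC1 : ContDiff ℝ 1 f)
    (hfscal : ∀ t > 0, (1 + m) * f t ≤ t * deriv f t ∧ t * deriv f t ≤ (1 + M) * f t)
    (hWfin : ∀ t > 0, IntegrableOn (fun s => (Fint f s) ^ (-(1:ℝ)/2)) (Set.Ioi t))
    {s : ℝ} (hs : 0 < s) :
    (m/2) * Wfun f s ≤ s * (Fint f s) ^ (-(1:ℝ)/2) ∧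
    s * (Fint f s) ^ (-(1:ℝ)/2) ≤ (M/2) * Wfun f s := by
  have hc := hfC1.continuous
  have hWt := W_tendsto hc hfpos hWfin
  constructor
  · -- lower bound via limit
    have hlim : Tendsto (fun T => (m/2) * (Wfun f s - Wfun f T)) atTop
        (𝓝 ((m/2) * (Wfun f s - 0))) :=
      (tendsto_const_nhds.sub hWt).const_mul _
    rw [sub_zero] at hlim
    apply le_of_tendsto hlim
    filter_upwards [eventually_ge_atTop s] with T hT
    have h1 := (G_step hm hmM hf0 hfnn hfpos hfC1 hfscal hWfin hs hT).1
    have hGT : 0 ≤ T * (Fint f T) ^ (-(1:ℝ)/2) :=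
      mul_nonneg (le_trans hs.le hT) (g_pos hc hfpos (lt_of_lt_of_le hs hT)).le
    linarith
  · -- upper bound via limit
    have hhalf : Tendsto (fun T : ℝ => T/2) atTop atTop := by
      apply Tendsto.atTop_div_const (by norm_num) tendsto_id
    have hlim : Tendsto (fun T => 2 * (Wfun f (T/2) - Wfun f T)) atTop (𝓝 (2 * (0 - 0))) :=
      ((hWt.comp hhalf).sub hWt).const_mul _
    norm_num at hlim
    have key : s * (Fint f s) ^ (-(1:ℝ)/2) - (M/2) * Wfun f s ≤ 0 := by
      apply ge_of_tendsto hlim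
      filter_upwards [eventually_ge_atTop (2*s)] with T hT
      have hT2 : 0 < T/2 := by linarith
      have hsT : s ≤ T := by linarith
      have hTT : 2 * (T/2) = T := by ring
      have hdec := G_decay hc hfnn hfpos hWfin hT2
      rw [hTT] at hdec
      have h2 := (G_step hm hmM hf0 hfnn hfpos hfC1 hfscal hWfin hs hsT).2
      have hWT : 0 ≤ Wfun f T := (W_pos hc hfpos hWfin (by linarith : (0:ℝ) < T)).le
      have hM : 0 < M := lt_of_lt_of_le hm hmM
      nlinarith
    linarith

end KOAux

/-- The inverse `ψ` of `W` is a strictly decreasing `C¹` bijection of `(0,∞)` with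
`(2/M)·ψ(t)/t ≤ -ψ'(t) ≤ (2/m)·ψ(t)/t`; consequently `t ↦ ψ(t)·t^{2/m}` is nondecreasing
and `t ↦ ψ(t)·t^{2/M}` is nonincreasing on `(0,∞)`. -/
theorem psi_properties
    (m M : ℝ) (hm : 0 < m) (hmM : m ≤ M)
    (f : ℝ → ℝ) (hf0 : f 0 = 0) (hfnn : ∀ t, 0 ≤ f t) (hfpos : ∀ t > 0, 0 < f t)
    (hfC1 : ContDiff ℝ 1 f) (hfmono : Monotone f)
    (hfscal : ∀ t > 0, (1 + m) * f t ≤ t * deriv f t ∧ t * deriv f t ≤ (1 + M) * f t)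
    (hWfin : ∀ t > 0, IntegrableOn (fun s => (Fint f s) ^ (-(1:ℝ)/2)) (Set.Ioi t))
    (ψ : ℝ → ℝ) (hψpos : ∀ t > 0, 0 < ψ t)
    (hψW : ∀ t > 0, ψ (Wfun f t) = t) (hWψ : ∀ t > 0, Wfun f (ψ t) = t) :
    StrictAntiOn ψ (Set.Ioi 0) ∧
    ContDiffOn ℝ 1 ψ (Set.Ioi 0) ∧
    (∀ y > 0, ∃ t > 0, ψ t = y) ∧
    (∀ t > 0, (2 / M) * (ψ t / t) ≤ -(deriv ψ t) ∧ -(deriv ψ t) ≤ (2 / m) * (ψ t / t)) ∧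
    MonotoneOn (fun t => ψ t * t ^ ((2:ℝ) / m)) (Set.Ioi 0) ∧
    AntitoneOn (fun t => ψ t * t ^ ((2:ℝ) / M)) (Set.Ioi 0) := by
  have hM : 0 < M := lt_of_lt_of_le hm hmM
  have hc : Continuous f := hfC1.continuous
  -- surjectivity
  have hsurj : ∀ y > 0, ∃ t > 0, ψ t = y := fun y hy =>
    ⟨Wfun f y, W_pos hc hfpos hWfin hy, hψW y hy⟩
  -- strict antitonicity
  have hanti : StrictAntiOn ψ (Set.Ioi 0) := by
    intro s hs t ht hst
    rcases lt_trichotomy (ψ s) (ψ t) with h | h | h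
    · have := W_anti hc hfpos hWfin (hψpos s hs) h
      rw [hWψ s hs, hWψ t ht] at this
      exact absurd hst (not_lt.2 this.le)
    · have : s = t := by rw [← hWψ s hs, ← hWψ t ht, h]
      exact absurd hst (by rw [this]; exact lt_irrefl t)
    · exact h
  -- continuity
  have hψcont : ∀ t ∈ Set.Ioi (0:ℝ), ContinuousAt ψ t := by
    intro t ht
    have hmono : StrictMonoOn (fun x => -ψ x) (Set.Ioi (0:ℝ)) :=
      fun a ha b hb hab => neg_lt_neg (hanti ha hb hab)
    have himg : (fun x => -ψ x) '' (Set.Ioi (0:ℝ)) = Set.Iio 0 := by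
      ext y
      constructor
      · rintro ⟨x, hx, rfl⟩
        simpa using (hψpos x hx)
      · intro hy
        obtain ⟨x, hx, hxy⟩ := hsurj (-y) (by simpa using (mem_Iio.1 hy))
        exact ⟨x, hx, by simp [hxy]⟩
    have hcn : ContinuousAt (fun x => -ψ x) t := by
      apply hmono.continuousAt_of_image_mem_nhds (Ioi_mem_nhds ht)
      rw [himg]
      exact Iio_mem_nhds (by simpa using hψpos t ht)
    have := hcn.neg
    simpa only [Pi.neg_def, neg_neg] using this
  -- derivative of ψ
  have hψderiv : ∀ t ∈ Set.Ioi (0:ℝ),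
      HasDerivAt ψ (-((Fint f (ψ t)) ^ ((1:ℝ)/2))) t := by
    intro t ht
    have hs : 0 < ψ t := hψpos t ht
    have hF := Fint_pos hc hfpos hs
    have hW : HasDerivAt (Wfun f) (-((Fint f (ψ t)) ^ (-(1:ℝ)/2))) (ψ t) :=
      W_hasDerivAt hc hfpos hWfin hs
    have hne : -((Fint f (ψ t)) ^ (-(1:ℝ)/2)) ≠ 0 :=
      neg_ne_zero.2 (g_pos hc hfpos hs).ne'
    have hev : ∀ᶠ y in 𝓝 t, Wfun f (ψ y) = y := by
      filter_upwards [Ioi_mem_nhds ht] with y hy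
      exact hWψ y hy
    have h := HasDerivAt.of_local_left_inverse (hψcont t ht) hW hne hev
    refine h.congr_deriv ?_
    rw [show (-(1:ℝ)/2) = -((1:ℝ)/2) by norm_num, Real.rpow_neg hF.le, inv_neg, inv_inv]
  have hderiv_eq : ∀ t ∈ Set.Ioi (0:ℝ), deriv ψ t = -((Fint f (ψ t)) ^ ((1:ℝ)/2)) :=
    fun t ht => (hψderiv t ht).deriv
  -- derivative bounds
  have hbounds : ∀ t > 0,
      (2 / M) * (ψ t / t) ≤ -(deriv ψ t) ∧ -(deriv ψ t) ≤ (2 / m) * (ψ t / t) := by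
    intro t ht
    have hs : 0 < ψ t := hψpos t ht
    have hF := Fint_pos hc hfpos hs
    have hFh : 0 < (Fint f (ψ t)) ^ ((1:ℝ)/2) := Real.rpow_pos_of_pos hF _
    have hprod : (Fint f (ψ t)) ^ ((1:ℝ)/2) * (Fint f (ψ t)) ^ (-(1:ℝ)/2) = 1 := by
      rw [← Real.rpow_add hF]; norm_num
    obtain ⟨h1, h2⟩ := G_bounds hm hmM hf0 hfnn hfpos hfC1 hfscal hWfin hs
    rw [hWψ t ht] at h1 h2
    rw [hderiv_eq t ht, neg_neg]
    have h1' := mul_le_mul_of_nonneg_right h1 hFh.le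
    have h2' := mul_le_mul_of_nonneg_right h2 hFh.le
    have hsimp : ψ t * (Fint f (ψ t)) ^ (-(1:ℝ)/2) * ((Fint f (ψ t)) ^ ((1:ℝ)/2)) = ψ t := by
      rw [mul_assoc, mul_comm ((Fint f (ψ t)) ^ (-(1:ℝ)/2)), hprod, mul_one]
    rw [hsimp] at h1' h2'
    constructor
    · rw [div_mul_div_comm, div_le_iff₀ (by positivity)]
      nlinarith
    · rw [div_mul_div_comm, le_div_iff₀ (by positivity)]
      nlinarith
  -- C¹
  have hC1 : ContDiffOn ℝ 1 ψ (Set.Ioi 0) := by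
    have hψcOn : ContinuousOn ψ (Set.Ioi (0:ℝ)) :=
      fun t ht => (hψcont t ht).continuousWithinAt
    have hdcont : ContinuousOn (deriv ψ) (Set.Ioi (0:ℝ)) := by
      apply ContinuousOn.congr (g := deriv ψ)
        (f := fun t => -((Fint f (ψ t)) ^ ((1:ℝ)/2)))
      · apply ContinuousOn.neg
        apply ContinuousOn.rpow_const
        · exact (Fint_cont hc).comp_continuousOn hψcOn
        · exact fun x hx => Or.inr (by norm_num)
      · exact fun t ht => hderiv_eq t ht
    have : ContDiffOn ℝ (0 + 1) ψ (Set.Ioi (0:ℝ)) := by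
      rw [contDiffOn_succ_iff_deriv_of_isOpen isOpen_Ioi]
      refine ⟨fun t ht => (hψderiv t ht).differentiableAt.differentiableWithinAt, by simp, ?_⟩
      rw [contDiffOn_zero]
      exact hdcont
    simpa using this
  refine ⟨hanti, hC1, hsurj, hbounds, ?_, ?_⟩
  · -- monotone ψ t * t^(2/m)
    apply monotoneOn_of_deriv_nonneg (convex_Ioi 0)
    · apply ContinuousOn.mul (fun t ht => (hψcont t ht).continuousWithinAt)
      exact ContinuousOn.rpow_const continuousOn_id
        (fun x hx => Or.inl (ne_of_gt hx))
    · rw [interior_Ioi]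
      intro t ht
      exact ((hψderiv t ht).mul ((hasDerivAt_id t).rpow_const (p := (2:ℝ)/m)
        (Or.inl (ne_of_gt ht)))).differentiableAt.differentiableWithinAt
    · rw [interior_Ioi]
      intro t ht
      have hD : HasDerivAt (fun t => ψ t * t ^ ((2:ℝ)/m))
          (deriv ψ t * t ^ ((2:ℝ)/m) + ψ t * ((2:ℝ)/m * t ^ ((2:ℝ)/m - 1) * 1)) t := by
        have := (hψderiv t ht).mul ((hasDerivAt_id t).rpow_const (p := (2:ℝ)/m) (Or.inl (ne_of_gt ht)))
        rw [hderiv_eq t ht]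
        refine this.congr_deriv ?_
        simp only [id]
        ring
      rw [hD.deriv]
      have hb := (hbounds t ht).2
      have hA : (0:ℝ) < t ^ ((2:ℝ)/m) := Real.rpow_pos_of_pos ht _
      have hkey : t ^ ((2:ℝ)/m - 1) = t ^ ((2:ℝ)/m) / t := by
        rw [Real.rpow_sub ht, Real.rpow_one]
      rw [hkey]
      have hψt := hψpos t ht
      have e1 : ψ t * ((2:ℝ)/m * (t ^ ((2:ℝ)/m) / t) * 1)
          = (2/m) * (ψ t / t) * t ^ ((2:ℝ)/m) := by ring
      nlinarith [mul_le_mul_of_nonneg_right hb hA.le]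
  · -- antitone ψ t * t^(2/M)
    apply antitoneOn_of_deriv_nonpos (convex_Ioi 0)
    · apply ContinuousOn.mul (fun t ht => (hψcont t ht).continuousWithinAt)
      exact ContinuousOn.rpow_const continuousOn_id
        (fun x hx => Or.inl (ne_of_gt hx))
    · rw [interior_Ioi]
      intro t ht
      exact ((hψderiv t ht).mul ((hasDerivAt_id t).rpow_const (p := (2:ℝ)/M)
        (Or.inl (ne_of_gt ht)))).differentiableAt.differentiableWithinAt
    · rw [interior_Ioi]
      intro t ht
      have hD : HasDerivAt (fun t => ψ t * t ^ ((2:ℝ)/M))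
          (deriv ψ t * t ^ ((2:ℝ)/M) + ψ t * ((2:ℝ)/M * t ^ ((2:ℝ)/M - 1) * 1)) t := by
        have := (hψderiv t ht).mul ((hasDerivAt_id t).rpow_const (p := (2:ℝ)/M) (Or.inl (ne_of_gt ht)))
        rw [hderiv_eq t ht]
        refine this.congr_deriv ?_
        simp only [id]
        ring
      rw [hD.deriv]
      have hb := (hbounds t ht).1
      have hA : (0:ℝ) < t ^ ((2:ℝ)/M) := Real.rpow_pos_of_pos ht _
      have hkey : t ^ ((2:ℝ)/M - 1) = t ^ ((2:ℝ)/M) / t := by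
        rw [Real.rpow_sub ht, Real.rpow_one]
      rw [hkey]
      have hψt := hψpos t ht
      have e1 : ψ t * ((2:ℝ)/M * (t ^ ((2:ℝ)/M) / t) * 1)
          = (2/M) * (ψ t / t) * t ^ ((2:ℝ)/M) := by ring
      nlinarith [mul_le_mul_of_nonneg_right hb hA.le]
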